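/- A right LCM monoid admits at most one generalized scale: if M, N : S → ℕ^× are both generalized scales on the right LCM monoid S, then M = N. -/
import Mathlib


variable {S : Type*}

/-- The principal right ideal `sS` of a monoid. -/
def rIdeal [Monoid S] (s : S) : Set S := {x | ∃ r : S, x = s * r}

/-- A right LCM monoid: left cancellative, and any intersection of two principal
right ideals is empty or again a principal right ideal. -/
def IsRightLCMMonoid (S : Type*) [Monoid S] : Prop :=
  (∀ a b c : S, a * b = a * c → b = c) ∧
  (∀ s t : S, rIdeal s ∩ rIdeal t = (∅ : Set S) ∨ ∃ r : S, rIdeal s ∩ rIdeal t = rIdeal r)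

/-- The core of a right LCM monoid. -/
def core (S : Type*) [Monoid S] : Set S := {a | ∀ s : S, (rIdeal a ∩ rIdeal s).Nonempty}

/-- Core equivalence: `s ∼ t` iff `s * a = t * b` for some core elements `a, b`. -/
def coreEquiv [Monoid S] (s t : S) : Prop :=
  ∃ a ∈ core S, ∃ b ∈ core S, s * a = t * b

/-- A generalized scale on a right LCM monoid. -/
def IsGenScale [Monoid S] (N : S →* ℕ+) : Prop :=
  (∃ s : S, N s ≠ 1) ∧
  (∀ n : ℕ+, (∃ s : S, N s = n) →
    Nat.card (Quot (fun x y : {s : S // N s = n} => coreEquiv x.1 y.1)) = (n : ℕ)) ∧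
  (∀ s t : S, N s = N t → coreEquiv s t ∨ rIdeal s ∩ rIdeal t = (∅ : Set S)) ∧
  (∀ (s : S) (n : ℕ+), (∃ u : S, N u = n) →
    ∃ t : S, N t = n ∧ (rIdeal s ∩ rIdeal t).Nonempty)

/-- Irreducibility of an element of the image submonoid `N(S) ⊆ ℕ^×`. -/
def IrrInScale [Monoid S] (N : S →* ℕ+) (n : ℕ+) : Prop :=
  n ≠ 1 ∧ ∀ k l : ℕ+, (∃ u : S, N u = k) → (∃ v : S, N v = l) → n = k * l → k = 1 ∨ l = 1

section CoreFacts
variable [Monoid S]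

lemma mul_mem_rIdeal (s r : S) : s * r ∈ rIdeal s := ⟨r, rfl⟩

lemma mem_rIdeal_self (s : S) : s ∈ rIdeal s := ⟨1, (mul_one s).symm⟩

lemma one_mem_core : (1 : S) ∈ core S :=
  fun s => ⟨s, ⟨s, (one_mul s).symm⟩, mem_rIdeal_self s⟩

lemma mul_mem_core {a b : S} (ha : a ∈ core S) (hb : b ∈ core S) : a * b ∈ core S := by
  intro s
  obtain ⟨x, ⟨p, hp⟩, ⟨q, hq⟩⟩ := ha s
  obtain ⟨y, ⟨u, hu⟩, ⟨v, hv⟩⟩ := hb p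
  refine ⟨a * b * u, mul_mem_rIdeal _ _, ⟨q * v, ?_⟩⟩
  have : a * (b * u) = a * (p * v) := by rw [← hu, ← hv]
  calc a * b * u = a * (b * u) := by rw [mul_assoc]
    _ = a * p * v := by rw [this, mul_assoc]
    _ = s * q * v := by rw [← hp, ← hq]
    _ = s * (q * v) := by rw [mul_assoc]

/-- A left divisor of a core element is core. -/
lemma core_of_left_div {a x y : S} (hy : y ∈ core S) (h : a * x = y) : a ∈ core S := by
  intro s
  obtain ⟨w, ⟨u, hu⟩, hw⟩ := hy s
  exact ⟨w, ⟨x * u, by rw [← mul_assoc, h]; exact hu⟩, hw⟩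

/-- From a common multiple with one element of a coreEquiv pair, get one with the other. -/
lemma nonempty_rIdeal_trans {s u t : S} (h : (rIdeal s ∩ rIdeal u).Nonempty)
    (he : coreEquiv u t) : (rIdeal s ∩ rIdeal t).Nonempty := by
  obtain ⟨w, ⟨x, hx⟩, ⟨y, hy⟩⟩ := h
  obtain ⟨a, ha, b, _, hab⟩ := he
  obtain ⟨z, ⟨p, hp⟩, ⟨q, hq⟩⟩ := ha y
  refine ⟨s * (x * q), mul_mem_rIdeal _ _, ⟨b * p, ?_⟩⟩
  calc s * (x * q) = s * x * q := by rw [mul_assoc]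
    _ = u * y * q := by rw [← hx, hy]
    _ = u * (y * q) := by rw [mul_assoc]
    _ = u * (a * p) := by rw [← hq, hp]
    _ = u * a * p := by rw [mul_assoc]
    _ = t * b * p := by rw [hab]
    _ = t * (b * p) := by rw [mul_assoc]

/-- Two core elements have a common multiple with core witnesses. -/
lemma coreEquiv_of_core (hS : IsRightLCMMonoid S) {b c : S}
    (hb : b ∈ core S) (hc : c ∈ core S) : coreEquiv b c := by
  obtain ⟨hcanc, hlcm⟩ := hS
  rcases hlcm b c with h | ⟨r, hr⟩
  · obtain ⟨w, hw⟩ := hb c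
    rw [h] at hw; exact absurd hw (Set.notMem_empty w)
  · have hrr : r ∈ rIdeal b ∩ rIdeal c := hr ▸ mem_rIdeal_self r
    obtain ⟨⟨e, he⟩, ⟨f, hf⟩⟩ := hrr
    refine ⟨e, ?_, f, ?_, by rw [← he, ← hf]⟩
    · -- e ∈ core
      intro s
      obtain ⟨w, ⟨g, hg⟩, ⟨h', hh⟩⟩ := hc (b * s)
      have hw2 : w ∈ rIdeal b ∩ rIdeal c := ⟨⟨s * h', by rw [hh, mul_assoc]⟩, ⟨g, hg⟩⟩
      rw [hr] at hw2
      obtain ⟨p, hp⟩ := hw2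
      have : b * (s * h') = b * (e * p) := by
        rw [← mul_assoc, ← mul_assoc, ← he, ← hp, ← hh]
      have h3 : s * h' = e * p := hcanc _ _ _ this
      exact ⟨e * p, ⟨p, rfl⟩, ⟨h', h3.symm⟩⟩
    · -- f ∈ core
      intro s
      obtain ⟨w, ⟨g, hg⟩, ⟨h', hh⟩⟩ := hb (c * s)
      have hw2 : w ∈ rIdeal b ∩ rIdeal c := ⟨⟨g, hg⟩, ⟨s * h', by rw [hh, mul_assoc]⟩⟩
      rw [hr] at hw2
      obtain ⟨p, hp⟩ := hw2
      have : c * (s * h') = c * (f * p) := by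
        rw [← mul_assoc, ← mul_assoc, ← hf, ← hp, ← hh]
      have h3 : s * h' = f * p := hcanc _ _ _ this
      exact ⟨f * p, ⟨p, rfl⟩, ⟨h', h3.symm⟩⟩

lemma coreEquiv_refl (s : S) : coreEquiv s s := ⟨1, one_mem_core, 1, one_mem_core, rfl⟩

lemma coreEquiv_symm {s t : S} (h : coreEquiv s t) : coreEquiv t s := by
  obtain ⟨a, ha, b, hb, hab⟩ := h; exact ⟨b, hb, a, ha, hab.symm⟩

lemma coreEquiv_trans (hS : IsRightLCMMonoid S) {s t u : S}
    (h1 : coreEquiv s t) (h2 : coreEquiv t u) : coreEquiv s u := by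
  obtain ⟨a, ha, b, hb, hab⟩ := h1
  obtain ⟨c, hc, d, hd, hcd⟩ := h2
  obtain ⟨e, he, f, hf, hef⟩ := coreEquiv_of_core hS hb hc
  refine ⟨a * e, mul_mem_core ha he, d * f, mul_mem_core hd hf, ?_⟩
  calc s * (a * e) = s * a * e := by rw [mul_assoc]
    _ = t * b * e := by rw [hab]
    _ = t * (b * e) := by rw [mul_assoc]
    _ = t * (c * f) := by rw [hef]
    _ = t * c * f := by rw [mul_assoc]
    _ = u * d * f := by rw [hcd]
    _ = u * (d * f) := by rw [mul_assoc]

lemma coreEquiv_equivalence (hS : IsRightLCMMonoid S) : Equivalence (coreEquiv (S := S)) :=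
  ⟨coreEquiv_refl, coreEquiv_symm, coreEquiv_trans hS⟩

lemma rIdeal_nonempty_of_coreEquiv {s t : S} (h : coreEquiv s t) :
    (rIdeal s ∩ rIdeal t).Nonempty := by
  obtain ⟨a, _, b, _, hab⟩ := h
  exact ⟨s * a, mul_mem_rIdeal _ _, ⟨b, hab⟩⟩

end CoreFacts

section Scale
variable [Monoid S]

lemma fiberRel_equivalence (hS : IsRightLCMMonoid S) (N : S →* ℕ+) (n : ℕ+) :
    Equivalence (fun x y : {s : S // N s = n} => coreEquiv x.1 y.1) :=
  ⟨fun x => coreEquiv_refl x.1, fun h => coreEquiv_symm h, fun h1 h2 => coreEquiv_trans hS h1 h2⟩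

lemma quot_mk_eq_iff (hS : IsRightLCMMonoid S) (N : S →* ℕ+) (n : ℕ+)
    (x y : {s : S // N s = n}) :
    Quot.mk (fun x y : {s : S // N s = n} => coreEquiv x.1 y.1) x =
      Quot.mk (fun x y : {s : S // N s = n} => coreEquiv x.1 y.1) y ↔ coreEquiv x.1 y.1 := by
  rw [Quot.eq]
  exact (fiberRel_equivalence hS N n).eqvGen_iff

lemma scale_one_of_core (hS : IsRightLCMMonoid S) {N : S →* ℕ+} (hN : IsGenScale N)
    {a : S} (ha : a ∈ core S) : N a = 1 := by
  by_contra hna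
  set n := N a with hn
  have hcard := hN.2.1 n ⟨a, rfl⟩
  have hsub : Subsingleton (Quot (fun x y : {s : S // N s = n} => coreEquiv x.1 y.1)) := by
    constructor
    intro p q
    obtain ⟨x, rfl⟩ := Quot.exists_rep p
    obtain ⟨y, rfl⟩ := Quot.exists_rep q
    have hx : coreEquiv x.1 a := by
      rcases hN.2.2.1 x.1 a (by rw [x.2]) with h | h
      · exact h
      · obtain ⟨w, hw1, hw2⟩ := ha x.1
        rw [Set.inter_comm] at h
        exact absurd (h ▸ (⟨hw1, hw2⟩ : _)) (Set.notMem_empty w)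
    have hy : coreEquiv y.1 a := by
      rcases hN.2.2.1 y.1 a (by rw [y.2]) with h | h
      · exact h
      · obtain ⟨w, hw1, hw2⟩ := ha y.1
        rw [Set.inter_comm] at h
        exact absurd (h ▸ (⟨hw1, hw2⟩ : _)) (Set.notMem_empty w)
    have : coreEquiv x.1 y.1 := coreEquiv_trans hS hx (coreEquiv_symm hy)
    exact Quot.sound this
  have hone : Nat.card (Quot (fun x y : {s : S // N s = n} => coreEquiv x.1 y.1)) = 1 :=
    Nat.card_eq_one_iff_unique.mpr ⟨hsub, ⟨Quot.mk _ ⟨a, rfl⟩⟩⟩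
  rw [hone] at hcard
  exact hna (PNat.coe_eq_one_iff.mp (by omega))

lemma core_of_scale_one (hS : IsRightLCMMonoid S) {N : S →* ℕ+} (hN : IsGenScale N)
    {a : S} (ha : N a = 1) : a ∈ core S := by
  have hcard := hN.2.1 1 ⟨1, map_one N⟩
  have h1 : Subsingleton (Quot (fun x y : {s : S // N s = (1:ℕ+)} => coreEquiv x.1 y.1)) := by
    rw [PNat.one_coe, Nat.card_eq_one_iff_unique] at hcard
    exact hcard.1
  have := h1.elim (Quot.mk _ ⟨a, ha⟩) (Quot.mk _ ⟨1, map_one N⟩)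
  rw [quot_mk_eq_iff hS] at this
  obtain ⟨c, hc, d, hd, hcd⟩ := this
  rw [one_mul] at hcd
  exact core_of_left_div hd hcd

lemma scale_eq_of_coreEquiv {N : S →* ℕ+} (hS : IsRightLCMMonoid S) (hN : IsGenScale N)
    {s t : S} (h : coreEquiv s t) : N s = N t := by
  obtain ⟨a, ha, b, hb, hab⟩ := h
  have h1 : N (s * a) = N (t * b) := by rw [hab]
  rw [map_mul, map_mul, scale_one_of_core hS hN ha, scale_one_of_core hS hN hb,
    mul_one, mul_one] at h1
  exact h1

end Scale

section Counting
variable [Monoid S]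

/-- Counting lemma: a family with pairwise disjoint ideals, the foundation property,
and constant scale value `m` has exactly `m` members. -/
lemma card_of_foundation (hS : IsRightLCMMonoid S) {N : S →* ℕ+} (hN : IsGenScale N)
    {ι : Type*} (f : ι → S) (m : ℕ+)
    (hval : ∀ i, N (f i) = m)
    (hdisj : ∀ i j, i ≠ j → rIdeal (f i) ∩ rIdeal (f j) = (∅ : Set S))
    (hfound : ∀ s : S, ∃ i, (rIdeal s ∩ rIdeal (f i)).Nonempty) :
    Nat.card ι = (m : ℕ) := by
  obtain ⟨i0, _⟩ := hfound 1
  have hwit : ∃ s : S, N s = m := ⟨f i0, hval i0⟩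
  set g : ι → Quot (fun x y : {s : S // N s = m} => coreEquiv x.1 y.1) :=
    fun i => Quot.mk _ ⟨f i, hval i⟩ with hg
  have hbij : Function.Bijective g := by
    constructor
    · intro i j hij
      by_contra hne
      rw [hg] at hij
      simp only at hij
      rw [quot_mk_eq_iff hS] at hij
      have := rIdeal_nonempty_of_coreEquiv hij
      rw [hdisj i j hne] at this
      exact Set.not_nonempty_empty this
    · intro c
      obtain ⟨x, rfl⟩ := Quot.exists_rep c
      obtain ⟨i, hi⟩ := hfound x.1
      refine ⟨i, ?_⟩
      rw [hg]
      simp only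
      rw [quot_mk_eq_iff hS]
      rcases hN.2.2.1 (f i) x.1 (by rw [hval i, x.2]) with h | h
      · exact h
      · rw [Set.inter_comm] at h
        rw [h] at hi
        exact absurd hi Set.not_nonempty_empty
  rw [Nat.card_eq_of_bijective g hbij, hN.2.1 m hwit]

lemma coreEquiv_out_mk (hS : IsRightLCMMonoid S) {N : S →* ℕ+} {n : ℕ+}
    (x : {s : S // N s = n}) :
    coreEquiv x.1 (Quot.out (Quot.mk (fun x y : {s : S // N s = n} => coreEquiv x.1 y.1) x)).1 := by
  rw [← quot_mk_eq_iff hS N n, Quot.out_eq]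

lemma transversal_disj (hS : IsRightLCMMonoid S) {N : S →* ℕ+} (hN : IsGenScale N) {n : ℕ+}
    {q q' : Quot (fun x y : {s : S // N s = n} => coreEquiv x.1 y.1)} (h : q ≠ q') :
    rIdeal (Quot.out q).1 ∩ rIdeal (Quot.out q').1 = (∅ : Set S) := by
  rcases hN.2.2.1 (Quot.out q).1 (Quot.out q').1 (by rw [(Quot.out q).2, (Quot.out q').2]) with
    hc | hc
  · exfalso
    apply h
    rw [← Quot.out_eq q, ← Quot.out_eq q', quot_mk_eq_iff hS]
    exact hc
  · exact hc

lemma transversal_found (hS : IsRightLCMMonoid S) {N : S →* ℕ+} (hN : IsGenScale N) {n : ℕ+}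
    (hwit : ∃ u : S, N u = n) (s : S) :
    ∃ q : Quot (fun x y : {s : S // N s = n} => coreEquiv x.1 y.1),
      (rIdeal s ∩ rIdeal (Quot.out q).1).Nonempty := by
  obtain ⟨u, hu, hsu⟩ := hN.2.2.2 s n hwit
  exact ⟨Quot.mk _ ⟨u, hu⟩, nonempty_rIdeal_trans hsu (coreEquiv_out_mk hS ⟨u, hu⟩)⟩

end Counting

section Main
variable [Monoid S]

lemma step_lemma (hS : IsRightLCMMonoid S) {M N : S →* ℕ+} (hM : IsGenScale M)
    (hN : IsGenScale N) (k : ℕ+)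
    (IH : ∀ j : ℕ+, j < k → ∀ u : S, (M u = j → N u = j) ∧ (N u = j → M u = j))
    {s : S} (hsk : N s = k) : M s = k := by
  rcases eq_or_lt_of_le k.one_le with h1 | h1
  · rw [← h1] at hsk ⊢
    exact scale_one_of_core hS hM (core_of_scale_one hS hN hsk)
  classical
  -- the quotient of the `N`-fiber over `k`
  set Q := Quot (fun x y : {u : S // N u = k} => coreEquiv x.1 y.1) with hQ
  have hcardQ : Nat.card Q = (k : ℕ) := hN.2.1 k ⟨s, hsk⟩
  have : Finite Q := Nat.finite_of_card_ne_zero (by rw [hcardQ]; exact k.pos.ne')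
  have : Fintype Q := Fintype.ofFinite Q
  set t : Q → S := fun q => (Quot.out q).1 with htdef
  have ht : ∀ q, N (t q) = k := fun q => (Quot.out q).2
  set μ : Q → ℕ+ := fun q => M (t q) with hμdef
  have hμk : ∀ q, k ≤ μ q := by
    intro q
    by_contra hc
    push_neg at hc
    have := (IH (μ q) hc (t q)).1 rfl
    rw [ht q] at this
    exact absurd (this ▸ hc) (lt_irrefl _)
  set l : List Q := (Finset.univ : Finset Q).toList with hldef
  have hmem : ∀ q : Q, q ∈ l := fun q => Finset.mem_toList.mpr (Finset.mem_univ q)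
  set mstar : ℕ+ := (l.map μ).prod with hmstar
  set kq : Q → ℕ+ := fun q => ((l.erase q).map μ).prod with hkq
  have hfac : ∀ q, μ q * kq q = mstar := by
    intro q
    have hperm : (l.map μ).Perm ((q :: l.erase q).map μ) :=
      (List.perm_cons_erase (hmem q)).map μ
    have := hperm.prod_eq
    rw [List.map_cons, List.prod_cons] at this
    rw [hmstar, this]
  -- witness elements for the values `kq q`
  set w : Q → S := fun q => ((l.erase q).map t).prod with hwdef
  have hw : ∀ q, M (w q) = kq q := by
    intro q
    rw [hwdef]
    simp only
    rw [map_list_prod, List.map_map, hkq]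
    rfl
  -- transversals of the `M`-fibers over `kq q`
  set κ : Q → Type _ := fun q => Quot (fun x y : {u : S // M u = kq q} => coreEquiv x.1 y.1)
    with hκ
  set v : ∀ q, κ q → S := fun q c => (Quot.out c).1 with hvdef
  have hv : ∀ q c, M (v q c) = kq q := fun q c => (Quot.out c).2
  have hcardκ : ∀ q, Nat.card (κ q) = (kq q : ℕ) := fun q => hM.2.1 (kq q) ⟨w q, hw q⟩
  have : ∀ q, Finite (κ q) :=
    fun q => Nat.finite_of_card_ne_zero (by rw [hcardκ q]; exact (kq q).pos.ne')
  have : ∀ q, Fintype (κ q) := fun q => Fintype.ofFinite (κ q)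
  -- the refined family
  set F : (Σ q : Q, κ q) → S := fun p => t p.1 * v p.1 p.2 with hF
  have hvalF : ∀ p, M (F p) = mstar := by
    intro p
    rw [hF]
    simp only
    rw [map_mul, hv p.1 p.2]
    exact hfac p.1
  have hdisjF : ∀ p p' : (Σ q : Q, κ q), p ≠ p' →
      rIdeal (F p) ∩ rIdeal (F p') = (∅ : Set S) := by
    rintro ⟨q, c⟩ ⟨q', c'⟩ hne
    by_cases hqq : q = q'
    · subst hqq
      have hcc : c ≠ c' := fun h => hne (by rw [h])
      rw [Set.eq_empty_iff_forall_notMem]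
      rintro x ⟨⟨r, hr⟩, ⟨r', hr'⟩⟩
      have : t q * (v q c * r) = t q * (v q c' * r') := by
        rw [← mul_assoc, ← mul_assoc, ← hr, ← hr']
      have h2 : v q c * r = v q c' * r' := hS.1 _ _ _ this
      have : (rIdeal (v q c) ∩ rIdeal (v q c')).Nonempty :=
        ⟨v q c * r, mul_mem_rIdeal _ _, ⟨r', h2⟩⟩
      rw [transversal_disj hS hM hcc] at this
      exact Set.not_nonempty_empty this
    · rw [Set.eq_empty_iff_forall_notMem]
      rintro x ⟨⟨r, hr⟩, ⟨r', hr'⟩⟩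
      have : x ∈ rIdeal (t q) ∩ rIdeal (t q') :=
        ⟨⟨v q c * r, by rw [hr, mul_assoc]⟩, ⟨v q' c' * r', by rw [hr', mul_assoc]⟩⟩
      rw [transversal_disj hS hN hqq] at this
      exact Set.notMem_empty x this
  have hfoundF : ∀ s0 : S, ∃ p : (Σ q : Q, κ q), (rIdeal s0 ∩ rIdeal (F p)).Nonempty := by
    intro s0
    obtain ⟨q, x, ⟨x1, hx1⟩, ⟨y, hy⟩⟩ := transversal_found hS hN ⟨s, hsk⟩ s0
    obtain ⟨c, z, ⟨p1, hp1⟩, ⟨p2, hp2⟩⟩ := transversal_found hS hM ⟨w q, hw q⟩ y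
    refine ⟨⟨q, c⟩, s0 * (x1 * p1), mul_mem_rIdeal _ _, ⟨p2, ?_⟩⟩
    calc s0 * (x1 * p1) = s0 * x1 * p1 := by rw [mul_assoc]
      _ = t q * y * p1 := by rw [← hx1, hy]
      _ = t q * (y * p1) := by rw [mul_assoc]
      _ = t q * (v q c * p2) := by rw [← hp1, hp2]
      _ = t q * v q c * p2 := by rw [mul_assoc]
  have hcardF : Nat.card (Σ q : Q, κ q) = (mstar : ℕ) :=
    card_of_foundation hS hM F mstar hvalF hdisjF hfoundF
  have hsum : ∑ q : Q, (kq q : ℕ) = (mstar : ℕ) := by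
    rw [← hcardF, Nat.card_eq_fintype_card, Fintype.card_sigma]
    congr 1
    funext q
    rw [← Nat.card_eq_fintype_card, hcardκ q]
  -- all μ q equal k
  have hμall : ∀ q, μ q = k := by
    by_contra hc
    push_neg at hc
    obtain ⟨q0, hq0⟩ := hc
    have hlt : (k : ℕ) < (μ q0 : ℕ) := by
      have := hμk q0
      rcases lt_or_eq_of_le this with h | h
      · exact_mod_cast h
      · exact absurd h.symm hq0
    have hstrict : ∑ q : Q, (kq q : ℕ) * (k : ℕ) < ∑ q : Q, (kq q : ℕ) * (μ q : ℕ) := by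
      refine Finset.sum_lt_sum (fun q _ => Nat.mul_le_mul_left _ ?_) ⟨q0, Finset.mem_univ q0, ?_⟩
      · exact_mod_cast hμk q
      · exact mul_lt_mul_of_pos_left hlt (kq q0).pos
    have hrhs : ∑ q : Q, (kq q : ℕ) * (μ q : ℕ) = (k : ℕ) * (mstar : ℕ) := by
      have : ∀ q : Q, (kq q : ℕ) * (μ q : ℕ) = (mstar : ℕ) := by
        intro q
        rw [mul_comm]
        exact_mod_cast congrArg (fun x : ℕ+ => (x : ℕ)) (hfac q)
      rw [Finset.sum_congr rfl (fun q _ => this q), Finset.sum_const, Finset.card_univ,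
        ← Nat.card_eq_fintype_card, hcardQ, smul_eq_mul]
    have hlhs : ∑ q : Q, (kq q : ℕ) * (k : ℕ) = (mstar : ℕ) * (k : ℕ) := by
      rw [← Finset.sum_mul, hsum]
    rw [hrhs, hlhs, mul_comm] at hstrict
    exact absurd hstrict (lt_irrefl _)
  -- conclude
  have hqs : coreEquiv s (t (Quot.mk _ ⟨s, hsk⟩)) := coreEquiv_out_mk hS ⟨s, hsk⟩
  have := scale_eq_of_coreEquiv hS hM hqs
  rw [this]
  exact hμall _

end Main


theorem stmt17 [Monoid S] (hS : IsRightLCMMonoid S)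
    (M N : S →* ℕ+) (hM : IsGenScale M) (hN : IsGenScale N) :
    M = N := by
  have key : ∀ k : ℕ+, ∀ u : S, (M u = k → N u = k) ∧ (N u = k → M u = k) := by
    intro k
    induction k using PNat.strongInductionOn with
    | _ k IH =>
      intro u
      constructor
      · intro h
        exact step_lemma hS hN hM k (fun j hj u => ⟨(IH j hj u).2, (IH j hj u).1⟩) h
      · intro h
        exact step_lemma hS hM hN k (fun j hj u => IH j hj u) h
  ext u
  exact (key (N u) u).2 rfl
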